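/- arXiv:2302.06256 — 3 statements merged into one kernel-verified Lean document; each statement's English description precedes it below -/
import Mathlib

section
/- For every g ∈ SO₄(ℂ), the induced map ⋀²g on the second exterior power maps the subspace V₊ into itself. -/
/- STATEMENT 2: For every g ∈ SO₄(ℂ), the induced map ⋀²g on the second exterior
power maps the subspace V₊ into itself. -/

noncomputable section

open ExteriorAlgebra Matrix

/-- The antidiagonal matrix `J₄`. -/
def J4 : Matrix (Fin 4) (Fin 4) ℂ := !![0,0,0,1; 0,0,1,0; 0,1,0,0; 1,0,0,0]

/-- The standard basis of `ℂ⁴`. -/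
def e (i : Fin 4) : Fin 4 → ℂ := Pi.single i 1

/-- The wedge product `v ∧ w`, as an element of the second exterior power `⋀²ℂ⁴`. -/
def wedge (v w : Fin 4 → ℂ) : ⋀[ℂ]^2 (Fin 4 → ℂ) :=
  ⟨ιMulti ℂ 2 ![v, w], ιMulti_range ℂ 2 (Set.mem_range_self _)⟩

/-- `V₊` is the span of `{e₁∧e₃, e₁∧e₄ + e₃∧e₂, e₂∧e₄}` in `⋀²ℂ⁴`. -/
def Vplus : Submodule ℂ (⋀[ℂ]^2 (Fin 4 → ℂ)) :=
  Submodule.span ℂ {wedge (e 0) (e 2), wedge (e 0) (e 3) + wedge (e 2) (e 1), wedge (e 1) (e 3)}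


private lemma det_fin_four (A : Matrix (Fin 4) (Fin 4) ℂ) : A.det =
    A 0 0 * (A 1 1 * A 2 2 * A 3 3 - A 1 1 * A 2 3 * A 3 2 - A 1 2 * A 2 1 * A 3 3
      + A 1 2 * A 2 3 * A 3 1 + A 1 3 * A 2 1 * A 3 2 - A 1 3 * A 2 2 * A 3 1)
    - A 0 1 * (A 1 0 * A 2 2 * A 3 3 - A 1 0 * A 2 3 * A 3 2 - A 1 2 * A 2 0 * A 3 3
      + A 1 2 * A 2 3 * A 3 0 + A 1 3 * A 2 0 * A 3 2 - A 1 3 * A 2 2 * A 3 0)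
    + A 0 2 * (A 1 0 * A 2 1 * A 3 3 - A 1 0 * A 2 3 * A 3 1 - A 1 1 * A 2 0 * A 3 3
      + A 1 1 * A 2 3 * A 3 0 + A 1 3 * A 2 0 * A 3 1 - A 1 3 * A 2 1 * A 3 0)
    - A 0 3 * (A 1 0 * A 2 1 * A 3 2 - A 1 0 * A 2 2 * A 3 1 - A 1 1 * A 2 0 * A 3 2
      + A 1 1 * A 2 2 * A 3 0 + A 1 2 * A 2 0 * A 3 1 - A 1 2 * A 2 1 * A 3 0) := by
  rw [show A = !![A 0 0, A 0 1, A 0 2, A 0 3; A 1 0, A 1 1, A 1 2, A 1 3;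
      A 2 0, A 2 1, A 2 2, A 2 3; A 3 0, A 3 1, A 3 2, A 3 3] from by
    ext i j; fin_cases i <;> fin_cases j <;> rfl]
  simp [det_succ_row_zero, Fin.sum_univ_succ, det_fin_three,
    show ((1:Fin 4).succAbove 2) = 3 from rfl, show ((2:Fin 4).succAbove 2) = 3 from rfl,
    show (Fin.castSucc 2 : Fin 4) = 2 from rfl, show ((3:Fin 4).succAbove 2) = 2 from rfl]
  ring

set_option maxHeartbeats 1000000 in
private lemma jac_13_23 (A : Matrix (Fin 4) (Fin 4) ℂ) :
    A.adjugate 1 2 * A.adjugate 3 3 - A.adjugate 1 3 * A.adjugate 3 2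
      = -(A.det * (A 0 0 * A 1 2 - A 0 2 * A 1 0)) := by
  simp only [adjugate_apply]
  rw [det_fin_four, det_fin_four, det_fin_four, det_fin_four, det_fin_four]
  simp [updateRow_apply, Pi.single_apply]
  ring

set_option maxHeartbeats 1000000 in
private lemma jac_13_01 (A : Matrix (Fin 4) (Fin 4) ℂ) :
    A.adjugate 1 0 * A.adjugate 3 1 - A.adjugate 1 1 * A.adjugate 3 0
      = -(A.det * (A 2 0 * A 3 2 - A 2 2 * A 3 0)) := by
  simp only [adjugate_apply]
  rw [det_fin_four, det_fin_four, det_fin_four, det_fin_four, det_fin_four]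
  simp [updateRow_apply, Pi.single_apply]
  ring

set_option maxHeartbeats 1000000 in
private lemma jac_13_03 (A : Matrix (Fin 4) (Fin 4) ℂ) :
    A.adjugate 1 0 * A.adjugate 3 3 - A.adjugate 1 3 * A.adjugate 3 0
      = -(A.det * (A 1 0 * A 2 2 - A 1 2 * A 2 0)) := by
  simp only [adjugate_apply]
  rw [det_fin_four, det_fin_four, det_fin_four, det_fin_four, det_fin_four]
  simp [updateRow_apply, Pi.single_apply]
  ring

set_option maxHeartbeats 1000000 in
private lemma jac_02_23 (A : Matrix (Fin 4) (Fin 4) ℂ) :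
    A.adjugate 0 2 * A.adjugate 2 3 - A.adjugate 0 3 * A.adjugate 2 2
      = -(A.det * (A 0 1 * A 1 3 - A 0 3 * A 1 1)) := by
  simp only [adjugate_apply]
  rw [det_fin_four, det_fin_four, det_fin_four, det_fin_four, det_fin_four]
  simp [updateRow_apply, Pi.single_apply]
  ring

set_option maxHeartbeats 1000000 in
private lemma jac_02_01 (A : Matrix (Fin 4) (Fin 4) ℂ) :
    A.adjugate 0 0 * A.adjugate 2 1 - A.adjugate 0 1 * A.adjugate 2 0
      = -(A.det * (A 2 1 * A 3 3 - A 2 3 * A 3 1)) := by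
  simp only [adjugate_apply]
  rw [det_fin_four, det_fin_four, det_fin_four, det_fin_four, det_fin_four]
  simp [updateRow_apply, Pi.single_apply]
  ring

set_option maxHeartbeats 1000000 in
private lemma jac_02_03 (A : Matrix (Fin 4) (Fin 4) ℂ) :
    A.adjugate 0 0 * A.adjugate 2 3 - A.adjugate 0 3 * A.adjugate 2 0
      = -(A.det * (A 1 1 * A 2 3 - A 1 3 * A 2 1)) := by
  simp only [adjugate_apply]
  rw [det_fin_four, det_fin_four, det_fin_four, det_fin_four, det_fin_four]
  simp [updateRow_apply, Pi.single_apply]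
  ring

set_option maxHeartbeats 1000000 in
private lemma jac_03_23 (A : Matrix (Fin 4) (Fin 4) ℂ) :
    A.adjugate 0 2 * A.adjugate 3 3 - A.adjugate 0 3 * A.adjugate 3 2
      = A.det * (A 0 1 * A 1 2 - A 0 2 * A 1 1) := by
  simp only [adjugate_apply]
  rw [det_fin_four, det_fin_four, det_fin_four, det_fin_four, det_fin_four]
  simp [updateRow_apply, Pi.single_apply]
  ring

set_option maxHeartbeats 1000000 in
private lemma jac_03_01 (A : Matrix (Fin 4) (Fin 4) ℂ) :
    A.adjugate 0 0 * A.adjugate 3 1 - A.adjugate 0 1 * A.adjugate 3 0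
      = A.det * (A 2 1 * A 3 2 - A 2 2 * A 3 1) := by
  simp only [adjugate_apply]
  rw [det_fin_four, det_fin_four, det_fin_four, det_fin_four, det_fin_four]
  simp [updateRow_apply, Pi.single_apply]
  ring

set_option maxHeartbeats 1000000 in
private lemma jac_03_03 (A : Matrix (Fin 4) (Fin 4) ℂ) :
    A.adjugate 0 0 * A.adjugate 3 3 - A.adjugate 0 3 * A.adjugate 3 0
      = A.det * (A 1 1 * A 2 2 - A 1 2 * A 2 1) := by
  simp only [adjugate_apply]
  rw [det_fin_four, det_fin_four, det_fin_four, det_fin_four, det_fin_four]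
  simp [updateRow_apply, Pi.single_apply]
  ring

set_option maxHeartbeats 1000000 in
private lemma jac_03_12 (A : Matrix (Fin 4) (Fin 4) ℂ) :
    A.adjugate 0 1 * A.adjugate 3 2 - A.adjugate 0 2 * A.adjugate 3 1
      = A.det * (A 0 1 * A 3 2 - A 0 2 * A 3 1) := by
  simp only [adjugate_apply]
  rw [det_fin_four, det_fin_four, det_fin_four, det_fin_four, det_fin_four]
  simp [updateRow_apply, Pi.single_apply]
  ring


private lemma wedge_val (v w : Fin 4 → ℂ) :
    (wedge v w : ExteriorAlgebra ℂ (Fin 4 → ℂ)) = ι ℂ v * ι ℂ w := by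
  simp [wedge, ιMulti_apply, List.ofFn_succ]

private lemma vec_decomp (v : Fin 4 → ℂ) :
    v = v 0 • e 0 + v 1 • e 1 + v 2 • e 2 + v 3 • e 3 := by
  funext i; fin_cases i <;> simp [e, Pi.single_apply]

private lemma swap_ι (x y : Fin 4 → ℂ) : ι ℂ y * ι ℂ x = -(ι ℂ x * ι ℂ y) :=
  eq_neg_of_add_eq_zero_left (by simpa [add_comm] using ι_add_mul_swap (R := ℂ) x y)

private lemma wedge_expand (v w : Fin 4 → ℂ) : wedge v w =
    (v 0 * w 1 - v 1 * w 0) • wedge (e 0) (e 1) +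
    (v 0 * w 2 - v 2 * w 0) • wedge (e 0) (e 2) +
    (v 0 * w 3 - v 3 * w 0) • wedge (e 0) (e 3) +
    (v 1 * w 2 - v 2 * w 1) • wedge (e 1) (e 2) +
    (v 1 * w 3 - v 3 * w 1) • wedge (e 1) (e 3) +
    (v 2 * w 3 - v 3 * w 2) • wedge (e 2) (e 3) := by
  apply Subtype.ext
  push_cast [wedge_val]
  conv_lhs => rw [vec_decomp v, vec_decomp w]
  simp only [map_add, _root_.map_smul, mul_add, add_mul, smul_mul_assoc, mul_smul_comm, smul_smul,
    ι_sq_zero, smul_zero, add_zero, zero_add,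
    swap_ι (e 0) (e 1), swap_ι (e 0) (e 2), swap_ι (e 0) (e 3),
    swap_ι (e 1) (e 2), swap_ι (e 1) (e 3), swap_ι (e 2) (e 3)]
  module

private lemma wedge_swap (v w : Fin 4 → ℂ) : wedge w v = -wedge v w := by
  apply Subtype.ext
  push_cast [wedge_val]
  exact swap_ι v w

set_option maxHeartbeats 4000000 in
theorem exterior_square_preserves_Vplus
    (g : Matrix (Fin 4) (Fin 4) ℂ)
    (horth : gᵀ * J4 * g = J4) (hdet : g.det = 1)
    (Λ : (⋀[ℂ]^2 (Fin 4 → ℂ)) →ₗ[ℂ] (⋀[ℂ]^2 (Fin 4 → ℂ)))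
    (hΛ : ∀ v w : Fin 4 → ℂ, Λ (wedge v w) = wedge (g.mulVec v) (g.mulVec w)) :
    ∀ x ∈ Vplus, Λ x ∈ Vplus := by
  classical
  -- basic matrix facts
  have hJJ : J4 * J4 = 1 := by
    ext i j
    fin_cases i <;> fin_cases j <;>
      simp [J4, Matrix.mul_apply, Fin.sum_univ_four, Matrix.one_apply, Matrix.vecMul, Matrix.vecHead, Matrix.vecTail, dotProduct]
  have hleft : (J4 * gᵀ * J4) * g = 1 := by
    calc (J4 * gᵀ * J4) * g = J4 * (gᵀ * J4 * g) := by
          simp only [Matrix.mul_assoc]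
      _ = 1 := by rw [horth, hJJ]
  have hright : g * (J4 * gᵀ * J4) = 1 := mul_eq_one_comm.mp hleft
  have hAmat : g.adjugate = !![g 3 3, g 2 3, g 1 3, g 0 3;
      g 3 2, g 2 2, g 1 2, g 0 2;
      g 3 1, g 2 1, g 1 1, g 0 1;
      g 3 0, g 2 0, g 1 0, g 0 0] := by
    have h1 : g.adjugate = J4 * gᵀ * J4 := by
      calc g.adjugate = (g.adjugate * g) * (J4 * gᵀ * J4) := by
            rw [Matrix.mul_assoc, hright, Matrix.mul_one]
        _ = (g.det • (1 : Matrix (Fin 4) (Fin 4) ℂ)) * (J4 * gᵀ * J4) := by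
            rw [Matrix.adjugate_mul]
        _ = J4 * gᵀ * J4 := by rw [hdet]; simp
    rw [h1]
    ext i j
    fin_cases i <;> fin_cases j <;>
      simp [J4, Matrix.mul_apply, Fin.sum_univ_four, Matrix.vecMul, Matrix.vecHead, Matrix.vecTail, dotProduct]
  -- the ten scalar identities (consequences of Jacobi's theorem on minors of the adjugate)
  have t1 : g 0 0 * g 1 2 - g 1 0 * g 0 2 = 0 := by
    have j := jac_13_23 g; rw [hAmat, hdet] at j; simp at j; linear_combination j / 2
  have t2 : g 2 0 * g 3 2 - g 3 0 * g 2 2 = 0 := by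
    have j := jac_13_01 g; rw [hAmat, hdet] at j; simp at j; linear_combination j / 2
  have t3 : g 1 0 * g 2 2 - g 2 0 * g 1 2 = -(g 0 0 * g 3 2 - g 3 0 * g 0 2) := by
    have j := jac_13_03 g; rw [hAmat, hdet] at j; simp at j; linear_combination j
  have u1 : g 0 1 * g 1 3 - g 1 1 * g 0 3 = 0 := by
    have j := jac_02_23 g; rw [hAmat, hdet] at j; simp at j; linear_combination j / 2
  have u2 : g 2 1 * g 3 3 - g 3 1 * g 2 3 = 0 := by
    have j := jac_02_01 g; rw [hAmat, hdet] at j; simp at j; linear_combination j / 2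
  have u3 : g 1 1 * g 2 3 - g 2 1 * g 1 3 = -(g 0 1 * g 3 3 - g 3 1 * g 0 3) := by
    have j := jac_02_03 g; rw [hAmat, hdet] at j; simp at j; linear_combination j
  have m1 : g 0 0 * g 1 3 - g 1 0 * g 0 3 = g 0 1 * g 1 2 - g 1 1 * g 0 2 := by
    have j := jac_03_23 g; rw [hAmat, hdet] at j; simp at j; linear_combination j
  have m2 : g 2 0 * g 3 3 - g 3 0 * g 2 3 = g 2 1 * g 3 2 - g 3 1 * g 2 2 := by
    have j := jac_03_01 g; rw [hAmat, hdet] at j; simp at j; linear_combination j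
  have m3a : g 0 0 * g 3 3 - g 3 0 * g 0 3 = g 1 1 * g 2 2 - g 2 1 * g 1 2 := by
    have j := jac_03_03 g; rw [hAmat, hdet] at j; simp at j; linear_combination j
  have m3b : g 1 0 * g 2 3 - g 2 0 * g 1 3 = g 0 1 * g 3 2 - g 3 1 * g 0 2 := by
    have j := jac_03_12 g; rw [hAmat, hdet] at j; simp at j; linear_combination j
  -- columns of `g`
  have hmv : ∀ (c i : Fin 4), g.mulVec (e c) i = g i c := by
    intro c i
    simp [e, Matrix.mulVec_single]
  -- generators of V₊
  have mem1 : wedge (e 0) (e 2) ∈ Vplus := Submodule.subset_span (Set.mem_insert _ _)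
  have mem2 : wedge (e 0) (e 3) + wedge (e 2) (e 1) ∈ Vplus :=
    Submodule.subset_span (Set.mem_insert_of_mem _ (Set.mem_insert _ _))
  have mem3 : wedge (e 1) (e 3) ∈ Vplus :=
    Submodule.subset_span (Set.mem_insert_of_mem _ (Set.mem_insert_of_mem _ rfl))
  intro x hx
  refine Submodule.span_induction ?_ (by simp) ?_ ?_ hx
  · intro y hy
    simp only [Set.mem_insert_iff, Set.mem_singleton_iff] at hy
    rcases hy with rfl | rfl | rfl
    · have key : Λ (wedge (e 0) (e 2)) =
          (g 0 0 * g 2 2 - g 2 0 * g 0 2) • wedge (e 0) (e 2) +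
          (g 0 0 * g 3 2 - g 3 0 * g 0 2) • (wedge (e 0) (e 3) + wedge (e 2) (e 1)) +
          (g 1 0 * g 3 2 - g 3 0 * g 1 2) • wedge (e 1) (e 3) := by
        rw [hΛ, wedge_expand]
        simp only [hmv]
        rw [t1, t2, t3, show wedge (e 2) (e 1) = -wedge (e 1) (e 2) from wedge_swap _ _]
        module
      rw [key]
      exact add_mem (add_mem (Vplus.smul_mem _ mem1) (Vplus.smul_mem _ mem2))
        (Vplus.smul_mem _ mem3)
    · have key : Λ (wedge (e 0) (e 3) + wedge (e 2) (e 1)) =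
          ((g 0 0 * g 2 3 - g 2 0 * g 0 3) + (g 0 2 * g 2 1 - g 2 2 * g 0 1)) • wedge (e 0) (e 2) +
          ((g 1 1 * g 2 2 - g 2 1 * g 1 2) + (g 0 2 * g 3 1 - g 3 2 * g 0 1)) •
            (wedge (e 0) (e 3) + wedge (e 2) (e 1)) +
          ((g 1 0 * g 3 3 - g 3 0 * g 1 3) + (g 1 2 * g 3 1 - g 3 2 * g 1 1)) • wedge (e 1) (e 3) := by
        rw [map_add, hΛ, hΛ, wedge_expand (g.mulVec (e 0)), wedge_expand (g.mulVec (e 2))]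
        simp only [hmv]
        rw [m1, m2, m3a, m3b, show wedge (e 2) (e 1) = -wedge (e 1) (e 2) from wedge_swap _ _]
        module
      rw [key]
      exact add_mem (add_mem (Vplus.smul_mem _ mem1) (Vplus.smul_mem _ mem2))
        (Vplus.smul_mem _ mem3)
    · have key : Λ (wedge (e 1) (e 3)) =
          (g 0 1 * g 2 3 - g 2 1 * g 0 3) • wedge (e 0) (e 2) +
          (g 0 1 * g 3 3 - g 3 1 * g 0 3) • (wedge (e 0) (e 3) + wedge (e 2) (e 1)) +
          (g 1 1 * g 3 3 - g 3 1 * g 1 3) • wedge (e 1) (e 3) := by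
        rw [hΛ, wedge_expand]
        simp only [hmv]
        rw [u1, u2, u3, show wedge (e 2) (e 1) = -wedge (e 1) (e 2) from wedge_swap _ _]
        module
      rw [key]
      exact add_mem (add_mem (Vplus.smul_mem _ mem1) (Vplus.smul_mem _ mem2))
        (Vplus.smul_mem _ mem3)
  · intro a b _ _ ha hb
    rw [map_add]
    exact Vplus.add_mem ha hb
  · intro r a _ ha
    rw [LinearMap.map_smul]
    exact Vplus.smul_mem r ha


end
end

section
/- For every integer m ≥ 1, the map τ_m : K_m → ℂˣ defined by τ_m(k) = ψ(p^{−2m}(k₁₂ − 2k₁₃)), where k₁₂ and k₁₃ denote the (1,2)- and (1,3)-entries of k, is a group homomorphism: τ_m(k k′) = τ_m(k) τ_m(k′) for all k, k′ ∈ K_m. -/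
/- STATEMENT 7: For every m ≥ 1, the map τ_m : K_m → ℂˣ,
τ_m(k) = ψ(p^{−2m}(k₁₂ − 2k₁₃)), is a group homomorphism. -/

noncomputable section

open Matrix

theorem tau_m_is_character
    (p : ℕ) [Fact p.Prime]
    (ψ : ℚ_[p] → ℂˣ)
    (hψadd : ∀ x y : ℚ_[p], ψ (x + y) = ψ x * ψ y)
    (hψtriv : ∀ x : ℚ_[p], ‖x‖ ≤ 1 → ψ x = 1)
    (m : ℕ) (hm : 1 ≤ m)
    (J4 : Matrix (Fin 4) (Fin 4) ℚ_[p])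
    (hJ4 : J4 = !![0,0,0,1; 0,0,1,0; 0,1,0,0; 1,0,0,0])
    (k k' : Matrix (Fin 4) (Fin 4) ℚ_[p])
    -- k ∈ K_m
    (hk1 : kᵀ * J4 * k = J4) (hk2 : k.det = 1)
    (hk3 : ∀ i j : Fin 4, ‖(k - 1) i j‖ ≤ (p : ℝ) ^ (-(m : ℤ)))
    -- k' ∈ K_m
    (hk'1 : k'ᵀ * J4 * k' = J4) (hk'2 : k'.det = 1)
    (hk'3 : ∀ i j : Fin 4, ‖(k' - 1) i j‖ ≤ (p : ℝ) ^ (-(m : ℤ))) :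
    ψ ((p : ℚ_[p]) ^ (-(2 * m : ℤ)) * ((k * k') 0 1 - 2 * (k * k') 0 2)) =
      ψ ((p : ℚ_[p]) ^ (-(2 * m : ℤ)) * (k 0 1 - 2 * k 0 2)) *
        ψ ((p : ℚ_[p]) ^ (-(2 * m : ℤ)) * (k' 0 1 - 2 * k' 0 2)) := by
  have hp0 : (0:ℝ) < p := by exact_mod_cast (Fact.out : p.Prime).pos
  set c : ℚ_[p] := (p : ℚ_[p]) ^ (-(2 * m : ℤ)) with hc
  set a := k - 1 with ha
  set b := k' - 1 with hb
  have hab : k * k' = a * b + k + k' - 1 := by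
    rw [ha, hb]; noncomm_ring
  have h01 : (k * k') 0 1 = (a*b) 0 1 + k 0 1 + k' 0 1 := by
    rw [hab]
    simp [Matrix.add_apply, Matrix.sub_apply, Matrix.one_apply]
  have h02 : (k * k') 0 2 = (a*b) 0 2 + k 0 2 + k' 0 2 := by
    rw [hab]
    simp [Matrix.add_apply, Matrix.sub_apply, Matrix.one_apply]
  have key : c * ((k*k') 0 1 - 2*(k*k') 0 2)
      = (c * ((a*b) 0 1 - 2*(a*b) 0 2) + c * (k 0 1 - 2*k 0 2)) + c * (k' 0 1 - 2*k' 0 2) := by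
    rw [h01, h02]; ring
  -- norm bounds
  have habnorm : ∀ j : Fin 4, ‖(a*b) 0 j‖ ≤ (p:ℝ) ^ (-(2*m:ℤ)) := by
    intro j
    rw [Matrix.mul_apply]
    apply IsUltrametricDist.norm_sum_le_of_forall_le_of_nonneg
    · positivity
    · intro i _
      rw [norm_mul]
      calc ‖a 0 i‖ * ‖b i j‖ ≤ (p:ℝ)^(-(m:ℤ)) * (p:ℝ)^(-(m:ℤ)) := by
            apply mul_le_mul (hk3 0 i) (hk'3 i j) (norm_nonneg _) (by positivity)
        _ = (p:ℝ)^(-(2*m:ℤ)) := by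
            rw [← zpow_add₀ (ne_of_gt hp0)]; ring_nf
  have hE : ψ (c * ((a*b) 0 1 - 2*(a*b) 0 2)) = 1 := by
    apply hψtriv
    rw [norm_mul, hc, Padic.norm_p_zpow, neg_neg]
    have h2 : ‖(2:ℚ_[p])‖ ≤ 1 := by
      have := Padic.norm_int_le_one (p := p) 2
      simpa using this
    have hx : ‖(a*b) 0 1 - 2*(a*b) 0 2‖ ≤ (p:ℝ) ^ (-(2*m:ℤ)) := by
      rw [sub_eq_add_neg]
      refine le_trans (IsUltrametricDist.norm_add_le_max _ _) (max_le (habnorm 1) ?_)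
      rw [norm_neg, norm_mul]
      calc ‖(2:ℚ_[p])‖ * ‖(a*b) 0 2‖ ≤ 1 * ((p:ℝ)^(-(2*m:ℤ))) :=
            mul_le_mul h2 (habnorm 2) (norm_nonneg _) zero_le_one
        _ = _ := one_mul _
    calc (p:ℝ)^(2*m:ℤ) * ‖(a*b) 0 1 - 2*(a*b) 0 2‖
        ≤ (p:ℝ)^(2*m:ℤ) * (p:ℝ)^(-(2*m:ℤ)) := by
          apply mul_le_mul_of_nonneg_left hx (by positivity)
      _ = 1 := by rw [← zpow_add₀ (ne_of_gt hp0)]; simp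
  rw [key, hψadd, hψadd, hE, one_mul]

end
end

section
/- Let a, b, t ∈ ℂ with a ≠ 0, b ≠ 0, a ≠ b, ab ≠ 1, |a t| < |b|, and |b t| < |a|. Then the series ∑_{k=0}^{∞} [(a^{k+2} b^{1−k} − a^{1−k} b^{k+2} − a^{k+1} b^{−k} + a^{−k} b^{k+1}) / ((a−b)(ab−1))] · t^k converges absolutely, and its sum equals (1 + t) / ((1 − a b^{−1} t)(1 − a^{−1} b t)). -/
/- STATEMENT 9: the power-series identity underlying the unramified computation:
∑_{k≥0} [(a^{k+2}b^{1−k} − a^{1−k}b^{k+2} − a^{k+1}b^{−k} + a^{−k}b^{k+1})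
          /((a−b)(ab−1))]·t^k
converges absolutely and equals (1+t)/((1−ab⁻¹t)(1−a⁻¹bt)). -/

noncomputable section

set_option maxHeartbeats 800000

/-- The Casselman–Shalika coefficient at `k`. -/
def csCoeff (a b : ℂ) (k : ℕ) : ℂ :=
  (a ^ ((k : ℤ) + 2) * b ^ (1 - (k : ℤ)) - a ^ (1 - (k : ℤ)) * b ^ ((k : ℤ) + 2)
      - a ^ ((k : ℤ) + 1) * b ^ (-(k : ℤ)) + a ^ (-(k : ℤ)) * b ^ ((k : ℤ) + 1)) /
    ((a - b) * (a * b - 1))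

theorem unramified_series_identity
    (a b t : ℂ) (ha : a ≠ 0) (hb : b ≠ 0) (hab : a ≠ b) (hab1 : a * b ≠ 1)
    (h1 : ‖a * t‖ < ‖b‖) (h2 : ‖b * t‖ < ‖a‖) :
    Summable (fun k : ℕ => ‖csCoeff a b k * t ^ k‖) ∧
    ∑' k : ℕ, csCoeff a b k * t ^ k =
      (1 + t) / ((1 - a * b⁻¹ * t) * (1 - a⁻¹ * b * t)) := by
  have hx : ‖a * b⁻¹ * t‖ < 1 := by
    have hbpos : 0 < ‖b‖ := norm_pos_iff.mpr hb
    have e : ‖a * b⁻¹ * t‖ = ‖a * t‖ / ‖b‖ := by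
      rw [norm_mul, norm_mul, norm_mul, norm_inv]; ring
    rw [e]; exact (div_lt_one hbpos).mpr h1
  have hy : ‖a⁻¹ * b * t‖ < 1 := by
    have hapos : 0 < ‖a‖ := norm_pos_iff.mpr ha
    have e : ‖a⁻¹ * b * t‖ = ‖b * t‖ / ‖a‖ := by
      rw [norm_mul, norm_mul, norm_mul, norm_inv]; ring
    rw [e]; exact (div_lt_one hapos).mpr h2
  have hsub : a - b ≠ 0 := sub_ne_zero.mpr hab
  have hsub1 : a * b - 1 ≠ 0 := sub_ne_zero.mpr hab1
  have hd : (a - b) * (a * b - 1) ≠ 0 := mul_ne_zero hsub hsub1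
  have key : ∀ k : ℕ, csCoeff a b k * t ^ k =
      (a / (a - b)) * (a * b⁻¹ * t) ^ k - (b / (a - b)) * (a⁻¹ * b * t) ^ k := by
    intro k
    unfold csCoeff
    simp only [zpow_add₀ ha, zpow_add₀ hb, zpow_sub₀ ha, zpow_sub₀ hb, zpow_neg,
      zpow_one, zpow_natCast, zpow_ofNat, mul_pow, inv_pow, pow_one]
    rw [show a / (a - b) * (a ^ k * (b ^ k)⁻¹ * t ^ k) - b / (a - b) * ((a ^ k)⁻¹ * b ^ k * t ^ k)
        = (a * (a ^ k * (b ^ k)⁻¹ * t ^ k) - b * ((a ^ k)⁻¹ * b ^ k * t ^ k)) / (a - b) by ring,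
      div_mul_eq_mul_div, div_eq_div_iff hd hsub]
    ring
  have hsx : Summable (fun k : ℕ => (a / (a - b)) * (a * b⁻¹ * t) ^ k) :=
    (summable_geometric_of_norm_lt_one hx).mul_left _
  have hsy : Summable (fun k : ℕ => (b / (a - b)) * (a⁻¹ * b * t) ^ k) :=
    (summable_geometric_of_norm_lt_one hy).mul_left _
  have hsum : Summable (fun k : ℕ => ‖csCoeff a b k * t ^ k‖) := by
    refine Summable.of_nonneg_of_le (fun k => norm_nonneg _) (fun k => ?_)
      (hsx.norm.add hsy.norm)
    rw [key k]
    exact norm_sub_le _ _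
  refine ⟨hsum, ?_⟩
  rw [tsum_congr key, Summable.tsum_sub hsx hsy, tsum_mul_left, tsum_mul_left,
    tsum_geometric_of_norm_lt_one hx, tsum_geometric_of_norm_lt_one hy]
  have h1x : (1 : ℂ) - a * b⁻¹ * t ≠ 0 := by
    intro h
    rw [sub_eq_zero] at h
    have : ‖a * b⁻¹ * t‖ = 1 := by rw [← h]; simp
    linarith [hx, this.ge]
  have h1y : (1 : ℂ) - a⁻¹ * b * t ≠ 0 := by
    intro h
    rw [sub_eq_zero] at h
    have : ‖a⁻¹ * b * t‖ = 1 := by rw [← h]; simp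
    linarith [hy, this.ge]
  have hbat : b - a * t ≠ 0 := by
    intro h
    rw [sub_eq_zero] at h
    rw [← h] at h1
    exact lt_irrefl _ h1
  have habt : a - b * t ≠ 0 := by
    intro h
    rw [sub_eq_zero] at h
    rw [← h] at h2
    exact lt_irrefl _ h2
  have ex : 1 - a * b⁻¹ * t = (b - a * t) / b := by field_simp
  have ey : 1 - a⁻¹ * b * t = (a - b * t) / a := by field_simp
  rw [ex, ey]
  field_simp
  ring

end
end
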